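/- arXiv:1407.7894 — 8 statements merged into one kernel-verified Lean document; each statement's English description precedes it below -/
import Mathlib

section
/- Let n > 1 and q > 1 be integers such that C(n-1, k) ≡ (-1)^k (mod q) for every integer k with 0 ≤ k ≤ n-1. Then q is prime and n is a power of q (i.e., n = q^f for some positive integer f). -/
/-!
By Pascal's rule, `C(n, k) = C(n-1, k-1) + C(n-1, k) ≡ (-1)^(k-1) + (-1)^k = 0 (mod q)` for
`0 < k < n`, so `q` divides `gcd_{0<k<n} C(n, k)`. This gcd is `1` unless `n` is a prime power,
and equals the prime `p` when `n = p^f`; as `q > 1`, this forces `q = p`.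
-/

open Finset

theorem dvd_choose_succ_of_choose_modEq_neg_one_pow {n : ℕ} {m : ℤ}
    (h : ∀ k ≤ n, (n.choose k : ℤ) ≡ (-1) ^ k [ZMOD m]) {k : ℕ} (hk : k ∈ Icc 1 n) :
    m ∣ (n + 1).choose k := by
  obtain ⟨j, rfl⟩ : ∃ j, k = j + 1 := ⟨k - 1, by grind⟩
  have hsum : ((n + 1).choose (j + 1) : ℤ) ≡ (-1) ^ j + (-1) ^ (j + 1) [ZMOD m] := by
    rw [Nat.choose_succ_succ, Nat.cast_add]
    exact (h j (by grind)).add (h (j + 1) (by grind))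
  rw [show ((-1 : ℤ) ^ j + (-1) ^ (j + 1)) = 0 by ring] at hsum
  exact Int.ModEq.dvd hsum.symm

theorem eq_minFac_and_isPrimePow_of_dvd_gcd_choose {n q : ℕ} (hn : 1 < n) (hq : 1 < q)
    (hdvd : q ∣ (Icc 1 (n - 1)).gcd n.choose) : q = n.minFac ∧ IsPrimePow n := by
  have hpow : IsPrimePow n := by
    by_contra hnpow
    rw [Choose.gcd_choose_eq_one_of_not_isPrimePow hn hnpow, Nat.dvd_one] at hdvd
    omega
  rw [Choose.gcd_choose_eq_minFac_of_isPrimePow hpow] at hdvd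
  have hp : n.minFac.Prime := Nat.minFac_prime_iff.mpr hpow.ne_one
  exact ⟨(Nat.dvd_prime hp).mp hdvd |>.resolve_left (by omega), hpow⟩

theorem stmt2 (n q : ℕ) (hn : 1 < n) (hq : 1 < q)
    (h : ∀ k ≤ n - 1, (((n - 1).choose k : ℤ)) ≡ (-1) ^ k [ZMOD (q : ℤ)]) :
    q.Prime ∧ ∃ f : ℕ, 0 < f ∧ n = q ^ f := by
  have hdvd : q ∣ (Icc 1 (n - 1)).gcd n.choose := by
    refine Finset.dvd_gcd fun k hk => ?_
    have := dvd_choose_succ_of_choose_modEq_neg_one_pow h hk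
    rwa [Nat.sub_add_cancel hn.le, Int.natCast_dvd_natCast] at this
  obtain ⟨rfl, hpow⟩ := eq_minFac_and_isPrimePow_of_dvd_gcd_choose hn hq hdvd
  obtain ⟨f, -, hf, hnf⟩ := (isPrimePow_nat_iff_bounded_log_minFac n).mp hpow
  exact ⟨Nat.minFac_prime_iff.mpr hpow.ne_one, f, hf, hnf⟩
end

section
/- An integer n ≥ 2 is prime if and only if C(n-1, k) ≡ (-1)^k (mod n) for all integers k with 0 ≤ k ≤ n-1. -/
/-! By Pascal's rule `C(n, k) = C(n - 1, k - 1) + C(n - 1, k)`, the congruences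
`C(n - 1, k) ≡ (-1) ^ k (mod n)` for `k ≤ n - 1` are equivalent to `n ∣ C(n, k)` for
`0 < k < n`. The latter characterizes primes: for a prime power `n` the gcd of these binomial
coefficients is the least prime factor of `n`, and otherwise it is `1`. -/

open Finset

theorem Int.choose_modEq_neg_one_pow_iff_choose_succ_modEq_zero (N : ℕ) (m : ℤ) :
    (∀ k ≤ N, (N.choose k : ℤ) ≡ (-1) ^ k [ZMOD m]) ↔
      ∀ k ∈ Icc 1 N, ((N + 1).choose k : ℤ) ≡ 0 [ZMOD m] := by
  constructor
  · intro h k hk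
    obtain ⟨j, rfl⟩ : ∃ j, k = j + 1 := ⟨k - 1, by grind⟩
    have hj : j + 1 ≤ N := (mem_Icc.mp hk).2
    calc ((N + 1).choose (j + 1) : ℤ) = N.choose j + N.choose (j + 1) := by
          rw [Nat.choose_succ_succ']; push_cast; rfl
      _ ≡ (-1) ^ j + (-1) ^ (j + 1) [ZMOD m] := (h j (by omega)).add (h (j + 1) hj)
      _ = 0 := by ring
  · intro h k hk
    induction k with
    | zero => simp [Int.ModEq.refl]
    | succ k ih =>
      calc (N.choose (k + 1) : ℤ) = (N + 1).choose (k + 1) - N.choose k := by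
            rw [Nat.choose_succ_succ']; push_cast; ring
        _ ≡ 0 - (-1) ^ k [ZMOD m] := (h (k + 1) (mem_Icc.mpr ⟨by omega, hk⟩)).sub (ih (by omega))
        _ = (-1) ^ (k + 1) := by ring

theorem Nat.prime_iff_forall_dvd_choose {n : ℕ} (hn : 2 ≤ n) :
    n.Prime ↔ ∀ k ∈ Icc 1 (n - 1), n ∣ n.choose k := by
  refine ⟨fun hp k hk => hp.dvd_choose_self (by grind) (by grind), fun h => ?_⟩
  have hgcd : n ∣ (Icc 1 (n - 1)).gcd n.choose := Finset.dvd_gcd h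
  by_cases hpow : IsPrimePow n
  · rw [Choose.gcd_choose_eq_minFac_of_isPrimePow hpow] at hgcd
    rw [Nat.le_antisymm (Nat.le_of_dvd (Nat.minFac_pos n) hgcd) (Nat.minFac_le (by omega))]
    exact Nat.minFac_prime (by omega)
  · rw [Choose.gcd_choose_eq_one_of_not_isPrimePow (by omega) hpow, Nat.dvd_one] at hgcd
    omega

theorem stmt3 (n : ℕ) (hn : 2 ≤ n) :
    n.Prime ↔ ∀ k ≤ n - 1, (((n - 1).choose k : ℤ)) ≡ (-1) ^ k [ZMOD (n : ℤ)] := by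
  obtain ⟨N, rfl⟩ : ∃ N, n = N + 1 := ⟨n - 1, by omega⟩
  rw [Nat.add_sub_cancel, Int.choose_modEq_neg_one_pow_iff_choose_succ_modEq_zero,
    Nat.prime_iff_forall_dvd_choose hn, Nat.add_sub_cancel]
  simp only [Int.modEq_zero_iff_dvd, Int.natCast_dvd_natCast]
end

section
/- For every prime p ≥ 3 and every integer f ≥ 2, the binomial coefficient C(p^f - 1, p^{f-1}) is congruent to p - 1 modulo p^2. -/
/-!
Write `C(pn - 1, pm) = ∏_{j ≤ pm} (pn - j) / j` and split the factors according to whether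
`p ∣ j`. The factors with `j = pi` give `∏_{i ≤ m} (n - i) / i = C(n - 1, m)`; when `p ∣ n`,
each of the remaining `(p - 1) m` factors is `≡ -1 (mod p²)`, since `p² ∣ pn` and `j` is a
unit mod `p²`. For odd `p` the signs cancel, so `C(pn - 1, pm) ≡ C(n - 1, m)`, and with
`n = p^f`, `m = p^(f-1)` the claim descends to `C(p - 1, 1) = p - 1`.
-/

open Finset
open scoped Nat

theorem choose_sub_one_mul_factorial_eq_prod_Icc {N k : ℕ} (hk : k ≤ N) :
    ((N - 1).choose k : ℤ) * k ! = ∏ j ∈ Icc 1 k, ((N : ℤ) - j) := by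
  induction k with
  | zero => simp
  | succ k ih =>
    have hsucc : ((N - 1).choose (k + 1) : ℤ) * (k + 1) = (N - 1).choose k * (N - (k + 1)) := by
      have := Nat.choose_succ_right_eq (N - 1) k
      have hsub : ((N - 1 - k : ℕ) : ℤ) = N - (k + 1) := by omega
      rw [← hsub]; exact_mod_cast this
    rw [prod_Icc_succ_top (by omega), ← ih (by omega), Nat.factorial_succ]
    push_cast
    linear_combination (k ! : ℤ) * hsucc

theorem natCast_factorial_eq_prod_Icc (k : ℕ) : (k ! : ℤ) = ∏ j ∈ Icc 1 k, (j : ℤ) := by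
  rw [← prod_Ico_id_eq_factorial, ← Ico_add_one_right_eq_Icc, Nat.cast_prod]

theorem Icc_filter_dvd_eq_image {p : ℕ} (hp : 0 < p) (m : ℕ) :
    {j ∈ Icc 1 (p * m) | p ∣ j} = (Icc 1 m).image (p * ·) := by
  ext j
  simp only [mem_filter, mem_Icc, mem_image]
  constructor
  · rintro ⟨⟨h1, h2⟩, i, rfl⟩
    exact ⟨i, ⟨Nat.pos_of_mul_pos_left h1, Nat.le_of_mul_le_mul_left h2 hp⟩, rfl⟩
  · rintro ⟨i, ⟨h1, h2⟩, rfl⟩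
    exact ⟨⟨Nat.mul_pos hp h1, Nat.mul_le_mul_left p h2⟩, dvd_mul_right p i⟩

theorem prod_Icc_mul_eq_prod_not_dvd_mul {M : Type*} [CommMonoid M] {p : ℕ} (hp : 0 < p) (m : ℕ)
    (g : ℕ → M) :
    ∏ j ∈ Icc 1 (p * m), g j =
      (∏ j ∈ Icc 1 (p * m) with ¬p ∣ j, g j) * ∏ i ∈ Icc 1 m, g (p * i) := by
  rw [← prod_filter_not_mul_prod_filter (p := (p ∣ ·)), Icc_filter_dvd_eq_image hp,
    prod_image fun a _ b _ h => Nat.eq_of_mul_eq_mul_left hp h]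

theorem card_Icc_filter_not_dvd {p : ℕ} (hp : 0 < p) (m : ℕ) :
    #{j ∈ Icc 1 (p * m) | ¬p ∣ j} = (p - 1) * m := by
  have hsplit := card_filter_add_card_filter_not (s := Icc 1 (p * m)) (p := (p ∣ ·))
  rw [Icc_filter_dvd_eq_image hp, card_image_of_injective _ fun a b h =>
    Nat.eq_of_mul_eq_mul_left hp h, Nat.card_Icc, Nat.card_Icc] at hsplit
  rw [Nat.sub_one_mul]
  omega

theorem choose_mul_sub_one_mul_prod_not_dvd {p n m : ℕ} (hp : 0 < p) (hm : m ≤ n) :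
    ((p * n - 1).choose (p * m) : ℤ) * ∏ j ∈ Icc 1 (p * m) with ¬p ∣ j, (j : ℤ) =
      (∏ j ∈ Icc 1 (p * m) with ¬p ∣ j, ((p * n : ℕ) - j : ℤ)) * (n - 1).choose m := by
  have hne : (p : ℤ) ^ m * m ! ≠ 0 := by positivity
  apply mul_right_cancel₀ hne
  have hfac :
      ((p * m) ! : ℤ) = (∏ j ∈ Icc 1 (p * m) with ¬p ∣ j, (j : ℤ)) * (p ^ m * m !) := by
    rw [natCast_factorial_eq_prod_Icc, prod_Icc_mul_eq_prod_not_dvd_mul hp,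
      natCast_factorial_eq_prod_Icc]
    simp [prod_mul_distrib]
  have hprod : ∏ j ∈ Icc 1 (p * m), ((p * n : ℕ) - j : ℤ) =
      (∏ j ∈ Icc 1 (p * m) with ¬p ∣ j, ((p * n : ℕ) - j : ℤ)) *
        (p ^ m * ∏ i ∈ Icc 1 m, ((n : ℤ) - i)) := by
    rw [prod_Icc_mul_eq_prod_not_dvd_mul hp]
    simp [← mul_sub, prod_mul_distrib]
  calc ((p * n - 1).choose (p * m) : ℤ) * (∏ j ∈ Icc 1 (p * m) with ¬p ∣ j, (j : ℤ)) *
        (p ^ m * m !)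
      = ((p * n - 1).choose (p * m) : ℤ) * (p * m) ! := by rw [hfac, mul_assoc]
    _ = ∏ j ∈ Icc 1 (p * m), ((p * n : ℕ) - j : ℤ) :=
        choose_sub_one_mul_factorial_eq_prod_Icc (Nat.mul_le_mul_left p hm)
    _ = _ := by rw [hprod, ← choose_sub_one_mul_factorial_eq_prod_Icc hm]; ring

theorem choose_mul_sub_one_modEq {p n m : ℕ} (hp : p.Prime) (hpn : p ∣ n) (hm : m ≤ n) :
    ((p * n - 1).choose (p * m) : ℤ) ≡ (-1) ^ ((p - 1) * m) * (n - 1).choose m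
      [ZMOD (p : ℤ) ^ 2] := by
  have hzero : ((p * n : ℕ) : ZMod (p ^ 2)) = 0 :=
    (ZMod.natCast_eq_zero_iff _ _).mpr (sq p ▸ Nat.mul_dvd_mul_left p hpn)
  have hunit : IsUnit (∏ j ∈ Icc 1 (p * m) with ¬p ∣ j, (j : ZMod (p ^ 2))) := by
    refine IsUnit.prod_iff.mpr fun j hj => (ZMod.isUnit_iff_coprime _ _).mpr ?_
    exact Nat.Coprime.pow_right 2 ((hp.coprime_iff_not_dvd.mpr (mem_filter.mp hj).2).symm)
  have key :=
    congrArg (Int.cast : ℤ → ZMod (p ^ 2)) (choose_mul_sub_one_mul_prod_not_dvd hp.pos hm)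
  simp only [Int.cast_mul, Int.cast_prod, Int.cast_sub, Int.cast_natCast, hzero, zero_sub,
    prod_neg, card_Icc_filter_not_dvd hp.pos] at key
  rw [← Nat.cast_pow, ← ZMod.intCast_eq_intCast_iff]
  push_cast
  exact hunit.mul_right_cancel (by rw [key]; ring)

theorem choose_mul_sub_one_modEq_of_odd {p n m : ℕ} (hp : p.Prime) (hodd : Odd p) (hpn : p ∣ n)
    (hm : m ≤ n) :
    ((p * n - 1).choose (p * m) : ℤ) ≡ (n - 1).choose m [ZMOD (p : ℤ) ^ 2] := by
  have heven : Even ((p - 1) * m) := (Nat.Odd.sub_odd hodd odd_one).mul_right m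
  simpa [heven.neg_one_pow] using choose_mul_sub_one_modEq hp hpn hm

theorem choose_prime_pow_sub_one_modEq {p : ℕ} (hp : p.Prime) (hodd : Odd p) {f : ℕ}
    (hf : 1 ≤ f) :
    ((p ^ f - 1).choose (p ^ (f - 1)) : ℤ) ≡ p - 1 [ZMOD (p : ℤ) ^ 2] := by
  induction f, hf using Nat.le_induction with
  | base => simp [Nat.cast_sub hp.one_le]
  | succ f hf ih =>
    have hstep := choose_mul_sub_one_modEq_of_odd hp hodd (dvd_pow_self p (by omega : f ≠ 0))
      (Nat.pow_le_pow_right hp.pos (Nat.sub_le f 1))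
    rw [← pow_succ', ← pow_succ', Nat.sub_add_cancel hf] at hstep
    rw [Nat.add_sub_cancel]
    exact hstep.trans ih

theorem stmt4 (p : ℕ) (hp : p.Prime) (hp3 : 3 ≤ p) (f : ℕ) (hf : 2 ≤ f) :
    (((p ^ f - 1).choose (p ^ (f - 1)) : ℤ)) ≡ (p : ℤ) - 1 [ZMOD ((p : ℤ) ^ 2)] :=
  choose_prime_pow_sub_one_modEq hp (hp.odd_of_ne_two (by omega)) (by omega)
end

section
/- For every integer f ≥ 2, the binomial coefficient C(2^f - 1, 2^{f-1}) is congruent to 3 modulo 4. -/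
open Polynomial

lemma eight_eq_zero : (8 : Polynomial (ZMod 8)) = 0 := by
  have h1 : ((8:ℕ) : Polynomial (ZMod 8)) = C ((8:ℕ) : ZMod 8) := by rw [Polynomial.C_eq_natCast]
  have h2 : ((8:ℕ) : ZMod 8) = 0 := rfl
  rw [h2, map_zero] at h1
  simpa using h1

lemma sq_identity (p : Polynomial (ZMod 8)) : (1 + p)^8 = (1 + p^2)^4 := by
  linear_combination (p + 3*p^2 + 7*p^3 + 8*p^4 + 7*p^5 + 3*p^6 + p^7) * eight_eq_zero

lemma key (k : ℕ) (hk : 2 ≤ k) :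
    ((1 + X : Polynomial (ZMod 8)))^(2^k) = (1 + X^(2^(k-2)))^4 := by
  induction k, hk using Nat.le_induction with
  | base => norm_num
  | succ k hk ih =>
    have h1 : 2^(k+1) = 2^k * 2 := by ring
    have h2 : (X^(2^(k-2)) : Polynomial (ZMod 8))^2 = X^(2^(k+1-2)) := by
      rw [← pow_mul]
      congr 1
      have : k + 1 - 2 = (k - 2) + 1 := by omega
      rw [this, pow_succ]
    calc ((1 + X : Polynomial (ZMod 8)))^(2^(k+1))
        = (((1 + X : Polynomial (ZMod 8)))^(2^k))^2 := by rw [h1, pow_mul]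
      _ = ((1 + X^(2^(k-2)))^4)^2 := by rw [ih]
      _ = ((1 + X^(2^(k-2)))^8 : Polynomial (ZMod 8)) := by ring
      _ = (1 + (X^(2^(k-2)))^2)^4 := sq_identity _
      _ = (1 + X^(2^(k+1-2)))^4 := by rw [h2]

lemma coeff_six (m : ℕ) (hm : 1 ≤ m) :
    ((1 + X^m : Polynomial (ZMod 8))^4).coeff (2*m) = 6 := by
  have hexp : (1 + X^m : Polynomial (ZMod 8))^4
      = 1 + 4*X^(m*1) + 6*X^(m*2) + 4*X^(m*3) + X^(m*4) := by
    rw [pow_mul X m 1, pow_mul X m 2, pow_mul X m 3, pow_mul X m 4]; ring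
  rw [hexp]
  simp only [Polynomial.coeff_add, Polynomial.coeff_one, Polynomial.coeff_ofNat_mul,
    Polynomial.coeff_X_pow]
  have e1 : ¬ (2*m = 0) := by omega
  have e2 : ¬ (m*1 = 2*m) := by omega
  have e3 : m*2 = 2*m := by ring
  have e4 : ¬ (m*3 = 2*m) := by omega
  have e5 : ¬ (m*4 = 2*m) := by omega
  rw [if_neg (by omega : ¬ (2*m = 0)), if_neg (fun h => e2 h.symm), if_pos e3.symm,
    if_neg (fun h => e4 h.symm), if_neg (fun h => e5 h.symm)]
  norm_num

lemma central_mod8 (f : ℕ) (hf : 2 ≤ f) : (2^f).choose (2^(f-1)) % 8 = 6 := by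
  have h1 : ((1 + X : Polynomial (ZMod 8))^(2^f)).coeff (2^(f-1))
      = ((2^f).choose (2^(f-1)) : ZMod 8) := by
    rw [add_comm, Polynomial.coeff_X_add_one_pow]
  have h2 : 2^(f-1) = 2 * 2^(f-2) := by
    have : f - 1 = (f-2) + 1 := by omega
    rw [this, pow_succ]; ring
  have h3 : ((1 + X : Polynomial (ZMod 8))^(2^f)).coeff (2^(f-1)) = 6 := by
    rw [key f hf, h2]
    exact coeff_six _ (Nat.one_le_two_pow)
  have h4 : (((2^f).choose (2^(f-1)) : ℕ) : ZMod 8) = ((6:ℕ) : ZMod 8) := by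
    rw [← h1, h3]; norm_num
  have := (ZMod.natCast_eq_natCast_iff _ _ _).mp h4
  unfold Nat.ModEq at this
  omega

lemma double (n : ℕ) (hn : 1 ≤ n) : (2*n).choose n = 2 * ((2*n-1).choose n) := by
  obtain ⟨m, rfl⟩ : ∃ m, n = m + 1 := ⟨n - 1, by omega⟩
  have h1 : 2 * (m+1) = (2*m+1) + 1 := by ring
  have h2 : 2 * (m+1) - 1 = 2*m+1 := by omega
  rw [h2, h1, Nat.choose_succ_succ]
  have hsymm := Nat.choose_symm_half m
  simp only [Nat.succ_eq_add_one] at *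
  omega

theorem stmt5 (f : ℕ) (hf : 2 ≤ f) :
    (((2 ^ f - 1).choose (2 ^ (f - 1)) : ℤ)) ≡ 3 [ZMOD 4] := by
  have hn : 1 ≤ 2^(f-1) := Nat.one_le_two_pow
  have h2 : 2^f = 2 * 2^(f-1) :=
    calc 2^f = 2^((f-1)+1) := by congr 1; omega
      _ = 2 * 2^(f-1) := by rw [pow_succ]; ring
  have hd := double (2^(f-1)) hn
  rw [← h2] at hd
  have hc := central_mod8 f hf
  rw [hd] at hc
  have : (2^f - 1).choose (2^(f-1)) % 4 = 3 := by omega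
  unfold Int.ModEq
  omega
end

section
/- For any prime p and any integers f ≥ 3, the congruence C(p^f - 1, p^{f-1} - 1) ≡ C(p^{f-1} - 1, p^{f-2} - 1) (mod p^2) holds. -/
open Finset

lemma desc_prod (n : ℕ) : ∀ k : ℕ, k < n →
    (((n - 1).descFactorial k : ℤ)) = ∏ j ∈ Icc 1 k, ((n : ℤ) - j)
  | 0, _ => by simp
  | (k+1), h => by
      rw [Finset.prod_Icc_succ_top (by omega : 1 ≤ k + 1), Nat.descFactorial_succ,
        ← desc_prod n k (by omega)]
      push_cast
      have : ((n - 1 - k : ℕ) : ℤ) = (n : ℤ) - (k + 1) := by omega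
      rw [this]; ring

lemma choose_prod (p : ℕ) (hp : p.Prime) (n m : ℕ) (hnm : n = p * m) (hm : 1 ≤ m) :
    (((n - 1).choose (m - 1) : ℤ)) * (((m-1).factorial : ℕ) : ℤ)
      = ∏ j ∈ Icc 1 (m-1), ((n:ℤ) - j) := by
  rw [← desc_prod n (m-1) (by have h2 := Nat.mul_le_mul_right m hp.two_le; omega),
    Nat.descFactorial_eq_factorial_mul_choose]
  push_cast; ring

lemma prod_Icc_fact (t : ℕ) : (∏ x ∈ Icc 1 t, x) = t.factorial := by
  rw [← Finset.Ico_add_one_right_eq_Icc, Finset.prod_Ico_id_eq_factorial]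

lemma mult_filter (p m k : ℕ) (hp : 2 ≤ p) (hm : m = p * k) (hk : 1 ≤ k) :
    (Icc 1 (m-1)).filter (fun j => p ∣ j) = (Icc 1 (k-1)).image (fun i => p * i) := by
  ext j
  simp only [mem_filter, mem_Icc, mem_image]
  constructor
  · rintro ⟨⟨h1, h2⟩, i, rfl⟩
    have hi1 : 1 ≤ i := Nat.pos_of_ne_zero (by rintro rfl; simp at h1)
    have h3 : p * i < p * k := by rw [← hm]; omega
    have : i < k := Nat.lt_of_mul_lt_mul_left h3
    exact ⟨i, ⟨hi1, by omega⟩, rfl⟩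
  · rintro ⟨i, ⟨h1, h2⟩, rfl⟩
    have hik : i < k := by omega
    have h3 : p * i < p * k := Nat.mul_lt_mul_of_le_of_lt (le_refl p) hik (by omega)
    exact ⟨⟨Nat.mul_pos (by omega) h1, by omega⟩, ⟨i, rfl⟩⟩

theorem stmt6 (p : ℕ) (hp : p.Prime) (f : ℕ) (hf : 3 ≤ f) :
    (((p ^ f - 1).choose (p ^ (f - 1) - 1) : ℤ)) ≡
      (((p ^ (f - 1) - 1).choose (p ^ (f - 2) - 1) : ℤ)) [ZMOD ((p : ℤ) ^ 2)] := by
  obtain ⟨r, rfl⟩ : ∃ r, f = r + 3 := ⟨f - 3, by omega⟩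
  have hp2 := hp.two_le
  simp only [show r + 3 - 1 = r + 2 from rfl, show r + 3 - 2 = r + 1 from rfl]
  set n := p ^ (r + 3) with hn
  set m := p ^ (r + 2) with hm
  set k := p ^ (r + 1) with hk
  have hk1 : 1 ≤ k := Nat.one_le_pow _ _ (by omega)
  have hm1 : 1 ≤ m := Nat.one_le_pow _ _ (by omega)
  have hnm : n = p * m := by rw [hn, hm]; ring
  have hmk : m = p * k := by rw [hm, hk]; ring
  set S := (Icc 1 (m-1)).filter (fun j => ¬ p ∣ j) with hS
  set A := ∏ j ∈ S, (j : ℤ) with hA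
  set B := ∏ j ∈ S, ((n : ℤ) - j) with hB
  -- general reindexing of the p-divisible part
  have hinj : ∀ g : ℕ → ℤ,
      ∏ j ∈ (Icc 1 (m-1)).filter (fun j => p ∣ j), g j = ∏ i ∈ Icc 1 (k-1), g (p * i) := by
    intro g
    rw [mult_filter p m k hp2 hmk hk1, prod_image]
    intro a _ b _ hab
    exact Nat.eq_of_mul_eq_mul_left (by omega) hab
  have hcardIcc : (Icc 1 (k-1)).card = k - 1 := by rw [Nat.card_Icc]; omega
  -- factorial side
  have hF : (((m-1).factorial : ℕ) : ℤ)
      = (p : ℤ) ^ (k-1) * (((k-1).factorial : ℕ) : ℤ) * A := by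
    have h0 : (((m-1).factorial : ℕ) : ℤ) = ∏ j ∈ Icc 1 (m-1), (j : ℤ) := by
      rw [← Nat.cast_prod, prod_Icc_fact]
    rw [h0, ← prod_filter_mul_prod_filter_not (Icc 1 (m-1)) (fun j => p ∣ j), ← hA,
      hinj (fun j => (j : ℤ))]
    have : ∏ i ∈ Icc 1 (k-1), ((p * i : ℕ) : ℤ) = (p:ℤ)^(k-1) * ∏ i ∈ Icc 1 (k-1), (i : ℤ) := by
      push_cast
      rw [prod_mul_distrib, prod_const, hcardIcc]
    rw [this, ← Nat.cast_prod, prod_Icc_fact]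
  -- descending product side
  have hD : ∏ j ∈ Icc 1 (m-1), ((n:ℤ) - j)
      = (p : ℤ) ^ (k-1) * (∏ i ∈ Icc 1 (k-1), ((m:ℤ) - i)) * B := by
    rw [← prod_filter_mul_prod_filter_not (Icc 1 (m-1)) (fun j => p ∣ j), ← hB,
      hinj (fun j => (n:ℤ) - j)]
    congr 1
    have : ∀ i ∈ Icc 1 (k-1), ((n:ℤ) - (p * i : ℕ)) = (p:ℤ) * ((m:ℤ) - i) := by
      intro i _
      rw [hnm]; push_cast; ring
    rw [prod_congr rfl this, prod_mul_distrib, prod_const, hcardIcc]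
  -- key integer identity
  have h1 := choose_prod p hp n m hnm hm1
  have h2 := choose_prod p hp m k hmk hk1
  have key : ((n-1).choose (m-1) : ℤ) * A = ((m-1).choose (k-1) : ℤ) * B := by
    have hne : (p : ℤ) ^ (k-1) * (((k-1).factorial : ℕ) : ℤ) ≠ 0 := by
      apply mul_ne_zero
      · exact pow_ne_zero _ (by exact_mod_cast hp.pos.ne')
      · exact_mod_cast (k-1).factorial_ne_zero
    apply mul_right_cancel₀ hne
    calc ((n-1).choose (m-1) : ℤ) * A * ((p:ℤ)^(k-1) * (((k-1).factorial : ℕ) : ℤ))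
        = ((n-1).choose (m-1) : ℤ) * ((p : ℤ) ^ (k-1) * (((k-1).factorial : ℕ) : ℤ) * A) := by
          ring
      _ = ((n-1).choose (m-1) : ℤ) * (((m-1).factorial : ℕ) : ℤ) := by rw [hF]
      _ = (p : ℤ) ^ (k-1) * (∏ i ∈ Icc 1 (k-1), ((m:ℤ) - i)) * B := by rw [h1, hD]
      _ = (p : ℤ) ^ (k-1) * (((m-1).choose (k-1) : ℤ) * (((k-1).factorial : ℕ) : ℤ)) * B := by
          rw [h2]
      _ = ((m-1).choose (k-1) : ℤ) * B * ((p:ℤ)^(k-1) * (((k-1).factorial : ℕ) : ℤ)) := by ring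
  -- move to ZMod (p^2)
  rw [show ((p:ℤ)^2) = ((p^2 : ℕ) : ℤ) by push_cast; ring, ← ZMod.intCast_eq_intCast_iff]
  have keyR : (((n-1).choose (m-1) : ℤ) : ZMod (p^2)) * (∏ j ∈ S, (j : ZMod (p^2)))
      = (((m-1).choose (k-1) : ℤ) : ZMod (p^2)) * (∏ j ∈ S, ((n : ZMod (p^2)) - j)) := by
    have := congrArg (fun z : ℤ => (z : ZMod (p^2))) key
    simpa [hA, hB] using this
  -- the B-product equals the A-product in ZMod (p^2)
  have hn0 : ((n : ℕ) : ZMod (p^2)) = 0 := by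
    rw [ZMod.natCast_eq_zero_iff]
    exact ⟨p^(r+1), by rw [hn]; ring⟩
  have hcardS : S.card = m - k := by
    have h3 := Finset.card_filter_add_card_filter_not
      (s := Icc 1 (m-1)) (p := fun j => p ∣ j)
    have h4 : ((Icc 1 (m-1)).filter (fun j => p ∣ j)).card = k - 1 := by
      rw [mult_filter p m k hp2 hmk hk1, Finset.card_image_of_injective _
        (fun a b hab => Nat.eq_of_mul_eq_mul_left (by omega) hab), hcardIcc]
    rw [h4, Nat.card_Icc, ← hS] at h3
    have h5 : 2 * k ≤ m := by rw [hmk]; exact Nat.mul_le_mul_right k hp2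
    omega
  have heven : Even S.card := by
    rw [hcardS]
    rcases hp.eq_two_or_odd' with rfl | hodd
    · have : m - k = k := by omega
      rw [this, hk]
      exact ⟨2^r, by ring⟩
    · exact Nat.Odd.sub_odd (hodd.pow) (hodd.pow)
  have hBA : (∏ j ∈ S, ((n : ZMod (p^2)) - j)) = ∏ j ∈ S, (j : ZMod (p^2)) := by
    calc (∏ j ∈ S, ((n : ZMod (p^2)) - j)) = ∏ j ∈ S, ((-1) * (j : ZMod (p^2))) := by
          apply prod_congr rfl; intro j _; rw [hn0]; ring
      _ = (-1)^S.card * ∏ j ∈ S, (j : ZMod (p^2)) := by rw [prod_mul_distrib, prod_const]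
      _ = ∏ j ∈ S, (j : ZMod (p^2)) := by rw [heven.neg_one_pow, one_mul]
  rw [hBA] at keyR
  -- cancel the unit
  have hunit : IsUnit (∏ j ∈ S, (j : ZMod (p^2))) := by
    apply Finset.prod_induction _ IsUnit (fun a b => IsUnit.mul) isUnit_one
    intro j hj
    rw [hS, mem_filter] at hj
    rw [ZMod.isUnit_iff_coprime]
    exact (Nat.Coprime.pow_right 2 (((hp.coprime_iff_not_dvd).mpr hj.2).symm))
  have := hunit.mul_right_cancel keyR
  exact_mod_cast this
end

section
/- For any prime p and any integer f ≥ 2, the congruence C(p^f - 1, p^{f-1} - 1) ≡ C(p^2 - 1, p - 1) (mod p^2) holds. -/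
open Finset Nat

private lemma filter_dvd_eq (p k : ℕ) (hp : 0 < p) :
    (Finset.Ico 1 (p*k)).filter (fun j => p ∣ j) = (Finset.Ico 1 k).image (fun i => p * i) := by
  ext j
  simp only [Finset.mem_filter, Finset.mem_Ico, Finset.mem_image]
  constructor
  · rintro ⟨⟨h1, h2⟩, i, rfl⟩
    refine ⟨i, ⟨?_, ?_⟩, rfl⟩
    · rcases Nat.eq_zero_or_pos i with h | h
      · simp [h] at h1
      · exact h
    · exact Nat.lt_of_mul_lt_mul_left h2
  · rintro ⟨i, ⟨h1, h2⟩, rfl⟩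
    refine ⟨⟨?_, ?_⟩, ⟨i, rfl⟩⟩
    · have : 1 * 1 ≤ p * i := Nat.mul_le_mul hp h1
      omega
    · exact mul_lt_mul_of_pos_left h2 hp

private lemma prod_split (p k : ℕ) (hp : 0 < p) (g : ℕ → ℕ) :
    ∏ j ∈ Finset.Ico 1 (p*k), g j =
      (∏ j ∈ (Finset.Ico 1 (p*k)).filter (fun j => ¬ p ∣ j), g j) *
        ∏ i ∈ Finset.Ico 1 k, g (p*i) := by
  rw [← Finset.prod_filter_mul_prod_filter_not (Finset.Ico 1 (p*k)) (fun j => p ∣ j) g,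
    filter_dvd_eq p k hp, Finset.prod_image (fun a _ b _ h => Nat.eq_of_mul_eq_mul_left hp h),
    mul_comm]

private lemma key_nat (p n k : ℕ) (hp : 0 < p) (hk : 1 ≤ k) (hkn : k ≤ n) :
    (p*n-1).choose (p*k-1) * ∏ j ∈ (Finset.Ico 1 (p*k)).filter (fun j => ¬ p ∣ j), j =
    (∏ j ∈ (Finset.Ico 1 (p*k)).filter (fun j => ¬ p ∣ j), (p*n - j)) * (n-1).choose (k-1) := by
  set S := (Finset.Ico 1 (p*k)).filter (fun j => ¬ p ∣ j) with hS
  set D := ∏ j ∈ S, j with hD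
  set N := ∏ j ∈ S, (p*n - j) with hN
  have hA : (p*n-1).descFactorial (p*k-1) = N * (p^(k-1) * (n-1).descFactorial (k-1)) := by
    have h0 : (p*n-1).descFactorial (p*k-1) = ∏ j ∈ Finset.Ico 1 (p*k), (p*n - j) := by
      rw [Nat.descFactorial_eq_prod_range, Finset.prod_Ico_eq_prod_range]
      exact Finset.prod_congr (by congr 1) fun i _ => by omega
    rw [h0, prod_split p k hp]
    congr 1
    have h1 : ∀ i ∈ Finset.Ico 1 k, p*n - p*i = p * (n - i) := fun i _ => by
      rw [Nat.mul_sub]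
    rw [Finset.prod_congr rfl h1, Finset.prod_mul_distrib, Finset.prod_const, Nat.card_Ico]
    congr 1
    rw [Nat.descFactorial_eq_prod_range, Finset.prod_Ico_eq_prod_range]
    exact Finset.prod_congr (by congr 1) fun i _ => by omega
  have hB : (p*k-1)! = D * (p^(k-1) * (k-1)!) := by
    have hpk1 : 1 ≤ p * k := le_trans hk (Nat.le_mul_of_pos_left k hp)
    have h0 : (p*k-1)! = ∏ j ∈ Finset.Ico 1 (p*k), j := by
      have h : p*k = (p*k-1)+1 := by omega
      conv_rhs => rw [h]
      rw [Finset.prod_Ico_id_eq_factorial]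
    rw [h0, prod_split p k hp (fun j => j)]
    congr 1
    rw [Finset.prod_mul_distrib, Finset.prod_const, Nat.card_Ico]
    congr 1
    have h : k = (k-1)+1 := by omega
    conv_lhs => rw [h]
    rw [Finset.prod_Ico_id_eq_factorial]
  have hpos : 0 < p^(k-1) * (k-1)! := by positivity
  refine Nat.eq_of_mul_eq_mul_right hpos ?_
  calc ((p*n-1).choose (p*k-1) * D) * (p^(k-1)*(k-1)!)
      = (p*n-1).choose (p*k-1) * (D * (p^(k-1)*(k-1)!)) := by ring
    _ = (p*k-1)! * (p*n-1).choose (p*k-1) := by rw [← hB]; ring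
    _ = (p*n-1).descFactorial (p*k-1) := (Nat.descFactorial_eq_factorial_mul_choose _ _).symm
    _ = N * (p^(k-1) * ((k-1)! * (n-1).choose (k-1))) := by
        rw [hA, Nat.descFactorial_eq_factorial_mul_choose]
    _ = (N * (n-1).choose (k-1)) * (p^(k-1)*(k-1)!) := by ring

private lemma key_mod (p n k : ℕ) (hp : p.Prime) (hk : 1 ≤ k) (hkn : k ≤ n) (hpn : p ∣ n)
    (heven : 2 ∣ p * k - k) :
    ((p*n-1).choose (p*k-1) : ℤ) ≡ ((n-1).choose (k-1) : ℤ) [ZMOD ((p:ℤ)^2)] := by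
  set S := (Finset.Ico 1 (p*k)).filter (fun j => ¬ p ∣ j) with hS
  have hmod : ((p:ℤ)^2) = ((p^2 : ℕ) : ℤ) := by push_cast; ring
  rw [hmod, ← ZMod.intCast_eq_intCast_iff]
  push_cast
  -- card of S is even
  have hcard : 2 ∣ S.card := by
    have h1 := Finset.card_filter_add_card_filter_not (s := Finset.Ico 1 (p*k))
      (p := fun j => p ∣ j)
    rw [filter_dvd_eq p k hp.pos,
      Finset.card_image_of_injective _ (fun a b h => Nat.eq_of_mul_eq_mul_left hp.pos h)] at h1
    simp only [Nat.card_Ico, ← hS] at h1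
    have hk1 : 1 ≤ p * k := le_trans hk (Nat.le_mul_of_pos_left k hp.pos)
    omega
  -- D is a unit
  have hunit : IsUnit ((∏ j ∈ S, (j : ZMod (p^2)))) := by
    rw [← Nat.cast_prod, ZMod.isUnit_iff_coprime]
    refine Nat.Coprime.prod_left fun j hj => ?_
    exact Nat.Coprime.pow_right 2 ((hp.coprime_iff_not_dvd.mpr (Finset.mem_filter.mp hj).2).symm)
  -- cast the key identity
  have hnat := key_nat p n k hp.pos hk hkn
  have hcast := congrArg (Nat.cast (R := ZMod (p^2))) hnat
  push_cast at hcast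
  have hterm : ∀ j ∈ S, ((p*n - j : ℕ) : ZMod (p^2)) = -((j : ℕ) : ZMod (p^2)) := by
    intro j hj
    have hjlt : j < p * k := (Finset.mem_Ico.mp (Finset.mem_filter.mp hj).1).2
    have hjle : j ≤ p * n := le_trans hjlt.le (Nat.mul_le_mul_left p hkn)
    rw [Nat.cast_sub hjle]
    have hz : ((p * n : ℕ) : ZMod (p^2)) = 0 := by
      rw [ZMod.natCast_eq_zero_iff]
      obtain ⟨m, rfl⟩ := hpn
      exact ⟨m, by ring⟩
    rw [hz, zero_sub]
  rw [Finset.prod_congr rfl hterm] at hcast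
  have hprodneg : (∏ j ∈ S, -((j : ℕ) : ZMod (p^2))) = ∏ j ∈ S, ((j : ℕ) : ZMod (p^2)) := by
    have : ∀ j ∈ S, -((j : ℕ) : ZMod (p^2)) = (-1) * ((j : ℕ) : ZMod (p^2)) := fun j _ => by ring
    rw [Finset.prod_congr rfl this, Finset.prod_mul_distrib, Finset.prod_const]
    have heven' : Even S.card := even_iff_two_dvd.mpr hcard
    rw [heven'.neg_one_pow, one_mul]
  rw [hprodneg] at hcast
  rw [mul_comm] at hcast
  exact hunit.mul_left_cancel hcast

theorem stmt7 (p : ℕ) (hp : p.Prime) (f : ℕ) (hf : 2 ≤ f) :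
    (((p ^ f - 1).choose (p ^ (f - 1) - 1) : ℤ)) ≡
      (((p ^ 2 - 1).choose (p - 1) : ℤ)) [ZMOD ((p : ℤ) ^ 2)] := by
  induction f, hf using Nat.le_induction with
  | base => norm_num
  | succ f hf ih =>
    have e1 : p^(f+1) = p * p^f := by ring
    have e2 : p^(f+1-1) = p * p^(f-1) := by
      have h : f - 1 + 1 = f := by omega
      calc p ^ (f+1-1) = p ^ ((f-1)+1) := by rw [Nat.add_sub_cancel, h]
        _ = p * p ^ (f-1) := pow_succ' p _
    have heven : 2 ∣ p * p^(f-1) - p^(f-1) := by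
      have h : p * p^(f-1) - p^(f-1) = (p-1) * p^(f-1) := by
        rw [Nat.sub_mul, one_mul]
      rw [h]
      rcases hp.eq_two_or_odd' with rfl | hodd
      · exact Dvd.dvd.mul_left (dvd_pow_self 2 (by omega)) _
      · exact Dvd.dvd.mul_right (even_iff_two_dvd.mp (Nat.Odd.sub_odd hodd odd_one)) _
    have hkey := key_mod p (p^f) (p^(f-1)) hp (Nat.one_le_pow _ _ hp.pos)
      (Nat.pow_le_pow_right hp.pos (by omega)) (dvd_pow_self p (by omega)) heven
    rw [e1, e2]
    exact hkey.trans ih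
end

section
/- For every prime p ≥ 3, the binomial coefficient C(p^2 - 1, p - 1) is congruent to 1 modulo p^2. -/
set_option maxRecDepth 4000 in
open Finset in
theorem stmt8 (p : ℕ) (hp : p.Prime) (hp3 : 3 ≤ p) :
    (((p ^ 2 - 1).choose (p - 1) : ℤ)) ≡ 1 [ZMOD ((p : ℤ) ^ 2)] := by
  have hmod : ((p : ℤ) ^ 2) = ((p ^ 2 : ℕ) : ℤ) := by push_cast; ring
  rw [hmod, ← ZMod.intCast_eq_intCast_iff]
  push_cast
  -- work in ZMod (p^2)
  have hp1 : 1 ≤ p := by omega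
  have key : ((p - 1).factorial : ZMod (p ^ 2)) * ((p ^ 2 - 1).choose (p - 1) : ZMod (p ^ 2))
      = ((p - 1).factorial : ZMod (p ^ 2)) := by
    have h1 : ((p ^ 2 - 1).descFactorial (p - 1) : ℕ) = (p - 1).factorial * (p ^ 2 - 1).choose (p - 1) :=
      Nat.descFactorial_eq_factorial_mul_choose _ _
    have h2 : (((p ^ 2 - 1).descFactorial (p - 1) : ℕ) : ZMod (p ^ 2))
        = ((p - 1).factorial : ZMod (p ^ 2)) := by
      rw [Nat.descFactorial_eq_prod_range]
      push_cast
      have h3 : ∀ i ∈ range (p - 1), ((p ^ 2 - 1 - i : ℕ) : ZMod (p ^ 2)) = -1 * ((i : ZMod (p^2)) + 1) := by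
        intro i hi
        rw [mem_range] at hi
        have hsq : p ≤ p ^ 2 := Nat.le_self_pow (by norm_num) p
        have hle : i ≤ p ^ 2 - 1 := by omega
        have : (p ^ 2 - 1 - i) + (i + 1) = p ^ 2 := by omega
        have h4 : ((p ^ 2 - 1 - i : ℕ) : ZMod (p ^ 2)) + ((i : ZMod (p^2)) + 1)
            = ((p ^ 2 - 1 - i + (i + 1) : ℕ) : ZMod (p ^ 2)) := by push_cast; ring
        rw [this, ZMod.natCast_self] at h4
        linear_combination h4
      rw [Finset.prod_congr rfl h3, Finset.prod_mul_distrib, Finset.prod_const,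
        Finset.card_range]
      have heven : Even (p - 1) :=
        Nat.Odd.sub_odd (hp.odd_of_ne_two (by omega)) odd_one
      rw [Even.neg_one_pow heven, one_mul, ← Finset.prod_range_add_one_eq_factorial]
      push_cast
      rfl
    rw [← Nat.cast_mul, ← h1]; exact h2
  have hunit : IsUnit ((p - 1).factorial : ZMod (p ^ 2)) := by
    rw [ZMod.isUnit_iff_coprime]
    have hnd : ¬ p ∣ (p - 1).factorial := fun h => by
      have := (Nat.Prime.dvd_factorial hp).mp h; omega
    exact Nat.Coprime.pow_right 2 ((Nat.Prime.coprime_iff_not_dvd hp).mpr hnd).symm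
  exact hunit.mul_left_cancel (by rw [mul_one]; exact key)
end

section
/- An integer n ≥ 2 is prime if and only if C(n+m, n) ≡ 1 (mod n) for all integers m with 0 ≤ m ≤ n-1. -/
lemma key13 (n m : ℕ) (h : ∀ k, 0 < k → k ≤ m → Nat.Coprime k n) :
    (((n + m).choose m : ℕ) : ZMod n) = 1 := by
  induction m with
  | zero => simp
  | succ m ih =>
    have h1 : (n + m + 1) * (n + m).choose m = (n + m + 1).choose (m + 1) * (m + 1) :=
      Nat.add_one_mul_choose_eq (n + m) m
    have hc : Nat.Coprime (m + 1) n := h (m + 1) (Nat.succ_pos m) le_rfl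
    have hu : IsUnit ((m : ZMod n) + 1) := by
      have he : ((m + 1 : ℕ) : ZMod n) = (m : ZMod n) + 1 := by push_cast; ring
      rw [← he]
      exact ⟨ZMod.unitOfCoprime (m + 1) hc, ZMod.coe_unitOfCoprime (m + 1) hc⟩
    have ih' : (((n + m).choose m : ℕ) : ZMod n) = 1 :=
      ih (fun k hk hkm => h k hk (le_trans hkm (Nat.le_succ m)))
    have h2 : (((n + m + 1) * (n + m).choose m : ℕ) : ZMod n)
        = (((n + m + 1).choose (m + 1) * (m + 1) : ℕ) : ZMod n) := by rw [h1]
    push_cast at h2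
    rw [ih', mul_one] at h2
    have hn0 : ((n : ℕ) : ZMod n) = 0 := ZMod.natCast_self n
    have h4 : ((n + m + 1).choose (m + 1) : ZMod n) = 1 := by
      apply hu.mul_left_cancel
      linear_combination -h2 + hn0
    show (((n + (m + 1)).choose (m + 1) : ℕ) : ZMod n) = 1
    rw [show n + (m + 1) = n + m + 1 from rfl]
    exact_mod_cast h4

theorem stmt13 (n : ℕ) (hn : 2 ≤ n) :
    n.Prime ↔ ∀ m ≤ n - 1, (((n + m).choose n : ℤ)) ≡ 1 [ZMOD (n : ℤ)] := by
  have hn0 : NeZero n := ⟨by omega⟩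
  constructor
  · intro hp m hm
    have hcop : ∀ k, 0 < k → k ≤ m → Nat.Coprime k n := by
      intro k hk hkm
      refine Nat.Coprime.symm ((Nat.Prime.coprime_iff_not_dvd hp).mpr ?_)
      intro hd
      have := Nat.le_of_dvd hk hd
      omega
    rw [← ZMod.intCast_eq_intCast_iff]
    push_cast
    rw [Nat.choose_symm_add]
    exact_mod_cast key13 n m hcop
  · intro h
    by_contra hnp
    set p := n.minFac with hp_def
    have hpp : p.Prime := Nat.minFac_prime (by omega)
    have hpdvd : p ∣ n := Nat.minFac_dvd n
    have hp2 : 2 ≤ p := hpp.two_le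
    have hplt : p < n := by
      rcases Nat.lt_or_ge p n with h' | h'
      · exact h'
      · exfalso
        have : p = n := le_antisymm (Nat.le_of_dvd (by omega) hpdvd) h'
        exact hnp (this ▸ hpp)
    set s := n / p with hs_def
    have hns : n = p * s := by rw [hs_def]; exact (Nat.mul_div_cancel' hpdvd).symm
    have hs1 : 1 ≤ s := by
      rcases Nat.eq_zero_or_pos s with h0 | h0
      · rw [h0, mul_zero] at hns; omega
      · exact h0
    have hsn : s < n := by
      by_contra hc
      push_neg at hc
      nlinarith
    have hiden : (n + p) * (n + (p - 1)).choose (p - 1) = (n + p).choose p * p := by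
      have hsmc := Nat.add_one_mul_choose_eq (n + (p - 1)) (p - 1)
      have e1 : n + (p - 1) + 1 = n + p := by omega
      have e2 : p - 1 + 1 = p := by omega
      rw [e1, e2] at hsmc
      exact hsmc
    have hchoose1 : (((n + (p - 1)).choose (p - 1) : ℕ) : ZMod n) = 1 := by
      apply key13
      intro k hk hkm
      have hkp : k < p := by omega
      by_contra hnc
      have hg : Nat.gcd k n ≠ 1 := hnc
      obtain ⟨q, hq, hqd⟩ := Nat.exists_prime_and_dvd hg
      have hqk : q ∣ k := hqd.trans (Nat.gcd_dvd_left k n)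
      have hqn : q ∣ n := hqd.trans (Nat.gcd_dvd_right k n)
      have := Nat.minFac_le_of_dvd hq.two_le hqn
      have := Nat.le_of_dvd hk hqk
      omega
    have hexact : (n + p).choose p = (s + 1) * (n + (p - 1)).choose (p - 1) := by
      have hcalc : p * ((s + 1) * (n + (p - 1)).choose (p - 1)) = p * ((n + p).choose p) := by
        calc p * ((s + 1) * (n + (p - 1)).choose (p - 1))
            = (p * s + p) * (n + (p - 1)).choose (p - 1) := by ring
          _ = (n + p) * (n + (p - 1)).choose (p - 1) := by rw [← hns]
          _ = (n + p).choose p * p := hiden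
          _ = p * ((n + p).choose p) := by ring
      exact (Nat.eq_of_mul_eq_mul_left (by omega) hcalc).symm
    have hm : p ≤ n - 1 := by omega
    have hcong := h p hm
    rw [← ZMod.intCast_eq_intCast_iff] at hcong
    push_cast at hcong
    rw [Nat.choose_symm_add, hexact] at hcong
    push_cast at hcong
    rw [hchoose1, mul_one] at hcong
    have hs0 : ((s : ℕ) : ZMod n) = 0 := by
      have : ((s : ZMod n) + 1) - 1 = 1 - 1 := by rw [hcong]
      simpa using this
    rw [ZMod.natCast_eq_zero_iff] at hs0
    have := Nat.le_of_dvd hs1 hs0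
    omega
end
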